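/- Let I and J be ideals of a ring R. Then the following are equivalent: (1) both R/I and R/J are strongly P-clean; (2) R/(IJ) is strongly P-clean; (3) R/(I ∩ J) is strongly P-clean. -/

import Mathlib

/-- An element `a` of a ring is strongly nilpotent if every sequence
`a = a₀, a₁, a₂, …` with `a_{i+1} ∈ a_i R a_i` is eventually zero. -/
def IsStronglyNilpotent {R : Type*} [Ring R] (a : R) : Prop :=
  ∀ f : ℕ → R, f 0 = a → (∀ i, ∃ r : R, f (i + 1) = f i * r * f i) → ∃ n, f n = 0

/-- The prime radical `P(R)`: the set of strongly nilpotent elements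
(equivalently, the intersection of all prime ideals). -/
def primeRadical (R : Type*) [Ring R] : Set R :=
  {a | IsStronglyNilpotent a}

/-- An element is strongly P-clean if it is the sum of an idempotent and an
element of the prime radical that commute. -/
def IsStronglyPClean {R : Type*} [Ring R] (x : R) : Prop :=
  ∃ e w : R, IsIdempotentElem e ∧ w ∈ primeRadical R ∧ x = e + w ∧ e * w = w * e

/-- A ring is strongly P-clean if each of its elements is strongly P-clean. -/
def StronglyPCleanRing (R : Type*) [Ring R] : Prop :=
  ∀ x : R, IsStronglyPClean x
/-- The product of two two-sided ideals: the two-sided ideal generated by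
products `a * b` with `a ∈ I`, `b ∈ J`. -/
def TwoSidedIdeal.idealMul {R : Type*} [Ring R] (I J : TwoSidedIdeal R) :
    TwoSidedIdeal R :=
  TwoSidedIdeal.span {x | ∃ a ∈ I, ∃ b ∈ J, x = a * b}

/-!
An element `x` is strongly P-clean exactly when `x - x²` is strongly nilpotent: if `x = e + w`
then `x - x² = w (1 - 2e - w)`, and conversely, `x - x²` being nilpotent, the idempotent
`e = 1 - (1 - xᵐ)ᵐ` is a polynomial in `x` with `x - e ∈ (x - x²) R`. Strong nilpotence passes
to quotients, which gives (2) ⇒ (3) ⇒ (1). For (1) ⇒ (2), lift a sequence `aᵢ₊₁ ∈ aᵢ (R/IJ) aᵢ`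
starting at `x - x²` to such a sequence `gᵢ` in `R`. It eventually enters `I` and `J`, and once a
term lies in an ideal all later ones do, so for large `N` the term `g_{N+1} = (g_N r) g_N`
lies in `IJ`.
-/

open Polynomial Function

theorem X_sub_X_sq_dvd_X_sub_one_sub_one_sub_pow_pow {m : ℕ} (hm : m ≠ 0) :
    (X - X ^ 2 : ℤ[X]) ∣ X - (1 - (1 - X ^ m) ^ m) := by
  have hX : (X : ℤ[X]) ∣ X - (1 - (1 - X ^ m) ^ m) := by
    rw [X_dvd_iff, coeff_zero_eq_eval_zero]
    simp [hm]
  have h1X : (1 - X : ℤ[X]) ∣ X - (1 - (1 - X ^ m) ^ m) := by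
    have : (1 - X : ℤ[X]) ∣ (1 - X ^ m) ^ m :=
      dvd_pow (by simpa using sub_dvd_pow_sub_pow (1 : ℤ[X]) X m) hm
    convert (dvd_neg.mpr (dvd_refl (1 - X : ℤ[X]))).add this using 1
    ring
  have hcop : IsCoprime (X : ℤ[X]) (1 - X) := ⟨1, 1, by ring⟩
  simpa [sq, mul_one_sub] using hcop.mul_dvd hX h1X

section Ring

variable {R : Type*} [Ring R]

def IsMSequence (f : ℕ → R) : Prop :=
  ∀ i, ∃ r : R, f (i + 1) = f i * r * f i

theorem IsStronglyNilpotent.isNilpotent {a : R} (ha : IsStronglyNilpotent a) :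
    IsNilpotent a := by
  obtain ⟨n, hn⟩ := ha (fun i => a ^ 2 ^ i) (by simp) fun i =>
    ⟨1, by rw [mul_one, ← pow_add, ← two_mul, pow_succ']⟩
  exact ⟨_, hn⟩

theorem IsStronglyNilpotent.mul_right {a : R} (ha : IsStronglyNilpotent a) (c : R) :
    IsStronglyNilpotent (a * c) := by
  intro f hf0 hf
  choose r hr using hf
  let g : ℕ → R := fun n => Nat.rec a (fun i gi => gi * (c * r i) * gi) n
  have hfg : ∀ i, f i = g i * c := by
    intro i
    induction i with
    | zero => exact hf0
    | succ i ih =>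
      rw [hr i, ih]
      simp only [g, mul_assoc]
  obtain ⟨n, hn⟩ := ha g rfl fun i => ⟨c * r i, rfl⟩
  exact ⟨n, by rw [hfg n, hn, zero_mul]⟩

theorem isStronglyPClean_of_isStronglyNilpotent_sub_sq {x : R}
    (hx : IsStronglyNilpotent (x - x ^ 2)) : IsStronglyPClean x := by
  obtain ⟨n, hn⟩ := hx.isNilpotent
  have hn' : (x - x ^ 2) ^ (n + 1) = 0 := by rw [pow_succ, hn, zero_mul]
  set m := n + 1
  let e : R := 1 - (1 - x ^ m) ^ m
  have he : IsIdempotentElem e := isIdempotentElem_one_sub_one_sub_pow_pow x m hn'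
  have hxe : Commute x e :=
    (Commute.one_right x).sub_right
      (((Commute.one_right x).sub_right (Commute.self_pow x m)).pow_right m)
  obtain ⟨q, hq⟩ := X_sub_X_sq_dvd_X_sub_one_sub_one_sub_pow_pow (Nat.succ_ne_zero n)
  have hw : x - e = (x - x ^ 2) * aeval x q := by
    simpa [e] using congrArg (aeval x) hq
  refine ⟨e, x - e, he, ?_, by abel, ?_⟩
  · show IsStronglyNilpotent (x - e)
    rw [hw]
    exact hx.mul_right _
  · exact (hxe.symm.sub_right (Commute.refl e)).eq

theorem IsStronglyPClean.isStronglyNilpotent_sub_sq {x : R} (hx : IsStronglyPClean x) :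
    IsStronglyNilpotent (x - x ^ 2) := by
  obtain ⟨e, w, he, hw, rfl, hew⟩ := hx
  have hsub : e + w - (e + w) ^ 2 = w * (1 - 2 * e - w) := by
    rw [sq, add_mul, mul_add, mul_add, he.eq, hew]
    noncomm_ring
  rw [hsub]
  exact hw.mul_right _

theorem isStronglyPClean_iff {x : R} :
    IsStronglyPClean x ↔ IsStronglyNilpotent (x - x ^ 2) :=
  ⟨IsStronglyPClean.isStronglyNilpotent_sub_sq, isStronglyPClean_of_isStronglyNilpotent_sub_sq⟩

theorem stronglyPCleanRing_iff :
    StronglyPCleanRing R ↔ ∀ x : R, IsStronglyNilpotent (x - x ^ 2) :=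
  forall_congr' fun _ => isStronglyPClean_iff

variable {S : Type*} [Ring S] {f : R →+* S}

theorem IsMSequence.map {g : ℕ → R} (hg : IsMSequence g) (f : R →+* S) : IsMSequence (f ∘ g) :=
  fun i => let ⟨r, hr⟩ := hg i; ⟨f r, by simp [hr]⟩

theorem IsMSequence.exists_lift (hf : Surjective f) {s : ℕ → S} (hs : IsMSequence s) {a : R}
    (ha : f a = s 0) : ∃ g : ℕ → R, g 0 = a ∧ IsMSequence g ∧ f ∘ g = s := by
  choose t ht using hs
  choose r hr using fun i => hf (t i)
  let g : ℕ → R := fun n => Nat.rec a (fun i gi => gi * r i * gi) n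
  have hgs : ∀ i, f (g i) = s i := by
    intro i
    induction i with
    | zero => exact ha
    | succ i ih => simp only [g, map_mul] at ih ⊢; rw [ih, hr, ht]
  exact ⟨g, rfl, fun i => ⟨r i, rfl⟩, funext hgs⟩

theorem isStronglyNilpotent_map_iff (hf : Surjective f) {a : R} :
    IsStronglyNilpotent (f a) ↔
      ∀ g : ℕ → R, g 0 = a → IsMSequence g → ∃ n, f (g n) = 0 := by
  refine ⟨fun h g hg0 hg => h (f ∘ g) (by simp [hg0]) (hg.map f), fun h s hs0 hs => ?_⟩
  obtain ⟨g, hg0, hg, rfl⟩ := IsMSequence.exists_lift hf hs hs0.symm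
  exact h g hg0 hg

theorem IsStronglyNilpotent.map {a : R} (ha : IsStronglyNilpotent a) (hf : Surjective f) :
    IsStronglyNilpotent (f a) :=
  (isStronglyNilpotent_map_iff hf).mpr fun g hg0 hg =>
    let ⟨n, hn⟩ := ha g hg0 hg; ⟨n, by rw [hn, map_zero]⟩

theorem StronglyPCleanRing.of_surjective (h : StronglyPCleanRing R) (hf : Surjective f) :
    StronglyPCleanRing S := by
  rw [stronglyPCleanRing_iff] at h ⊢
  intro y
  obtain ⟨x, rfl⟩ := hf y
  simpa using (h x).map hf

end Ring

namespace TwoSidedIdeal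

variable {R : Type*} [Ring R] (I J : TwoSidedIdeal R)

theorem ringCon_mk'_eq_zero_iff {a : R} : I.ringCon.mk' a = 0 ↔ a ∈ I :=
  (RingCon.eq _).trans (I.mem_iff a).symm

theorem isStronglyNilpotent_ringCon_mk'_iff {a : R} :
    IsStronglyNilpotent (I.ringCon.mk' a) ↔
      ∀ g : ℕ → R, g 0 = a → IsMSequence g → ∃ n, g n ∈ I := by
  simp only [isStronglyNilpotent_map_iff I.ringCon.mk'_surjective, ringCon_mk'_eq_zero_iff]

theorem stronglyPCleanRing_quotient_iff :
    StronglyPCleanRing I.ringCon.Quotient ↔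
      ∀ x : R, IsStronglyNilpotent (I.ringCon.mk' (x - x ^ 2)) := by
  simp only [stronglyPCleanRing_iff, I.ringCon.mk'_surjective.forall, map_sub, map_pow]

theorem _root_.StronglyPCleanRing.quotient_of_le {I J : TwoSidedIdeal R} (hIJ : I ≤ J)
    (h : StronglyPCleanRing I.ringCon.Quotient) : StronglyPCleanRing J.ringCon.Quotient :=
  h.of_surjective (f := RingCon.map _ _ (ringCon_le_iff.mp hIJ))
    (RingCon.lift_surjective_of_surjective _ J.ringCon.mk'_surjective)

theorem idealMul_le_inf : I.idealMul J ≤ I ⊓ J :=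
  span_le.mpr <| by
    rintro _ ⟨a, ha, b, hb, rfl⟩
    exact ⟨I.mul_mem_right _ _ ha, J.mul_mem_left _ _ hb⟩

variable {I J}

theorem _root_.IsMSequence.mem_of_le {g : ℕ → R} (hg : IsMSequence g) {n k : ℕ} (hn : g n ∈ I)
    (hnk : n ≤ k) : g k ∈ I := by
  induction k, hnk using Nat.le_induction with
  | base => exact hn
  | succ k _ ih =>
    obtain ⟨r, hr⟩ := hg k
    rw [hr]
    exact I.mul_mem_right _ _ (I.mul_mem_right _ _ ih)

theorem _root_.IsMSequence.exists_mem_idealMul {g : ℕ → R} (hg : IsMSequence g)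
    (hI : ∃ n, g n ∈ I) (hJ : ∃ n, g n ∈ J) : ∃ n, g n ∈ I.idealMul J := by
  obtain ⟨nI, hnI⟩ := hI
  obtain ⟨nJ, hnJ⟩ := hJ
  obtain ⟨r, hr⟩ := hg (max nI nJ)
  refine ⟨max nI nJ + 1, hr ▸ subset_span ⟨_, I.mul_mem_right _ r ?_, _, ?_, rfl⟩⟩
  · exact hg.mem_of_le hnI (le_max_left _ _)
  · exact hg.mem_of_le hnJ (le_max_right _ _)

theorem isStronglyNilpotent_ringCon_mk'_idealMul {a : R}
    (hI : IsStronglyNilpotent (I.ringCon.mk' a)) (hJ : IsStronglyNilpotent (J.ringCon.mk' a)) :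
    IsStronglyNilpotent ((I.idealMul J).ringCon.mk' a) := by
  rw [isStronglyNilpotent_ringCon_mk'_iff] at hI hJ ⊢
  exact fun g hg0 hg => hg.exists_mem_idealMul (hI g hg0 hg) (hJ g hg0 hg)

end TwoSidedIdeal

/-- **Proposition 2.10.** Let `I` and `J` be two-sided ideals of a ring `R`.
The following are equivalent: (1) `R/I` and `R/J` are strongly P-clean;
(2) `R/(IJ)` is strongly P-clean; (3) `R/(I ∩ J)` is strongly P-clean. -/
theorem stronglyPCleanRing_quotient_mul_inf_tfae
    (R : Type*) [Ring R] (I J : TwoSidedIdeal R) :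
    [StronglyPCleanRing I.ringCon.Quotient ∧ StronglyPCleanRing J.ringCon.Quotient,
     StronglyPCleanRing (I.idealMul J).ringCon.Quotient,
     StronglyPCleanRing (I ⊓ J).ringCon.Quotient].TFAE := by
  tfae_have 1 → 2 := by
    rintro ⟨hI, hJ⟩
    rw [TwoSidedIdeal.stronglyPCleanRing_quotient_iff] at hI hJ ⊢
    exact fun x => TwoSidedIdeal.isStronglyNilpotent_ringCon_mk'_idealMul (hI x) (hJ x)
  tfae_have 2 → 3 := .quotient_of_le (I.idealMul_le_inf J)
  tfae_have 3 → 1 := fun h =>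
    ⟨h.quotient_of_le inf_le_left, h.quotient_of_le inf_le_right⟩
  tfae_finish
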